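/- arXiv:1901.03218 — 2 statements merged into one kernel-verified Lean document; each statement's English description precedes it below -/
import Mathlib

section
/- If B is a bipartite well-covered graph with minimum degree at least 2, then for every vertex x of B, the induced subgraph B − N[x] has an isolated vertex; in particular, B has isolatable vertices. -/
/-- The direct (tensor) product of two simple graphs. -/
def directProd {V W : Type*} (G : SimpleGraph V) (H : SimpleGraph W) :
    SimpleGraph (V × W) where
  Adj x y := G.Adj x.1 y.1 ∧ H.Adj x.2 y.2
  symm := ⟨fun x y h => ⟨h.1.symm, h.2.symm⟩⟩
  loopless := ⟨fun x h => G.loopless.irrefl x.1 h.1⟩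

/-- `s` is an independent set of `G`. -/
def IsIndep {V : Type*} (G : SimpleGraph V) (s : Set V) : Prop :=
  ∀ ⦃u⦄, u ∈ s → ∀ ⦃v⦄, v ∈ s → ¬ G.Adj u v

/-- `s` is a maximal independent set of `G`. -/
def IsMaxIndep {V : Type*} (G : SimpleGraph V) (s : Set V) : Prop :=
  IsIndep G s ∧ ∀ t, IsIndep G t → s ⊆ t → s = t

/-- A graph is well-covered if all maximal independent sets have the same cardinality. -/
def WellCovered {V : Type*} (G : SimpleGraph V) : Prop :=
  ∀ s t, IsMaxIndep G s → IsMaxIndep G t → s.ncard = t.ncard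

/-- The independence number of `G`. -/
noncomputable def indepNum {V : Type*} (G : SimpleGraph V) : ℕ :=
  sSup {n | ∃ s, IsIndep G s ∧ s.ncard = n}

/-- The independent domination number of `G`: the minimum size of a maximal independent set. -/
noncomputable def iNum {V : Type*} (G : SimpleGraph V) : ℕ :=
  sInf {n | ∃ s, IsMaxIndep G s ∧ s.ncard = n}

/-- The closed neighborhood `N[s]` of a set of vertices. -/
def closedNbhd {V : Type*} (G : SimpleGraph V) (s : Set V) : Set V :=
  s ∪ {v | ∃ u ∈ s, G.Adj u v}

/-- `G` has no isolated vertices. -/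
def NoIsolated {V : Type*} (G : SimpleGraph V) : Prop := ∀ v, ∃ u, G.Adj v u

/-- A vertex `v` is isolatable if some independent set `I` leaves `v` isolated in `G - N[I]`. -/
def Isolatable {V : Type*} (G : SimpleGraph V) (v : V) : Prop :=
  ∃ I : Set V, IsIndep G I ∧ v ∉ closedNbhd G I ∧ ∀ u ∉ closedNbhd G I, ¬ G.Adj v u

/-
Let `Y` be the colour class of a 2-colouring of `B` that avoids `x`. Since `B` has no isolated
vertices, `Y` is a maximal independent set, and `N(x) ⊆ Y`. If no vertex of `B - N[x]` were
isolated there, then `{x} ∪ (Y \ N(x))` would also be a maximal independent set: a vertex of the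
other colour outside `N[x]` has a neighbour outside `N[x]`, which lies in `Y \ N(x)`. Its size is
`|Y| - deg x + 1 < |Y|`, contradicting well-coveredness.
-/

section

variable {V : Type*} {G : SimpleGraph V}

theorem mem_closedNbhd_singleton {x u : V} : u ∈ closedNbhd G {x} ↔ u = x ∨ G.Adj x u := by
  simp [closedNbhd]

theorem isIndep_singleton (x : V) : IsIndep G {x} := by
  intro u hu v hv
  rw [Set.mem_singleton_iff] at hu hv
  subst hu hv
  exact G.loopless.irrefl _

theorem IsIndep.isMaxIndep_of_forall_exists_adj {s : Set V} (hs : IsIndep G s)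
    (hdom : ∀ u ∉ s, ∃ w ∈ s, G.Adj u w) : IsMaxIndep G s := by
  refine ⟨hs, fun t ht hst => hst.antisymm fun u hu => ?_⟩
  by_contra hus
  obtain ⟨w, hws, huw⟩ := hdom u hus
  exact ht hu (hst hws) huw

theorem exists_isIndep_isIndep_compl_of_colorable_two (h : G.Colorable 2) (x : V) :
    ∃ Y : Set V, x ∉ Y ∧ IsIndep G Y ∧ IsIndep G Yᶜ := by
  obtain ⟨c⟩ := h
  refine ⟨{v | c v ≠ c x}, by simp, fun u hu v hv huv => c.valid huv (by simp_all; omega), ?_⟩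
  intro u hu v hv huv
  simp only [Set.mem_compl_iff, Set.mem_ofPred_eq, not_not] at hu hv
  exact c.valid huv (hu.trans hv.symm)

theorem isMaxIndep_of_isIndep_compl {Y : Set V} (hG : NoIsolated G) (hY : IsIndep G Y)
    (hYc : IsIndep G Yᶜ) : IsMaxIndep G Y := by
  refine hY.isMaxIndep_of_forall_exists_adj fun u hu => ?_
  obtain ⟨w, huw⟩ := hG u
  exact ⟨w, by_contra fun hw => hYc hu hw huw, huw⟩

theorem isMaxIndep_insert_diff_neighborSet {Y : Set V} {x : V} (hY : IsIndep G Y)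
    (hYc : IsIndep G Yᶜ) (hx : x ∉ Y)
    (hno : ∀ u ∉ closedNbhd G {x}, ∃ w ∉ closedNbhd G {x}, G.Adj u w) :
    IsMaxIndep G (insert x (Y \ G.neighborSet x)) := by
  refine IsIndep.isMaxIndep_of_forall_exists_adj ?_ fun u hu => ?_
  · rintro u (rfl | ⟨huY, hu⟩) v (rfl | ⟨hvY, hv⟩) huv
    exacts [G.loopless.irrefl _ huv, hv huv, hu huv.symm, hY huY hvY huv]
  · simp only [Set.mem_insert_iff, Set.mem_sdiff, SimpleGraph.mem_neighborSet, not_or, not_and,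
      not_not] at hu
    obtain ⟨hux, huY⟩ := hu
    by_cases hxu : G.Adj x u
    · exact ⟨x, Set.mem_insert x _, hxu.symm⟩
    have huYc : u ∈ Yᶜ := fun h => hxu (huY h)
    obtain ⟨w, hw, huw⟩ := hno u (by simp [mem_closedNbhd_singleton, hux, hxu])
    have hwY : w ∈ Y := by_contra fun h => hYc huYc h huw
    have hxw : ¬ G.Adj x w := fun h => hw (mem_closedNbhd_singleton.2 (Or.inr h))
    exact ⟨w, Set.mem_insert_of_mem _ ⟨hwY, hxw⟩, huw⟩

theorem exists_isolated_compl_closedNbhd_singleton [Finite V] (hbip : G.Colorable 2)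
    (hwc : WellCovered G) (hdeg : ∀ v, 2 ≤ (G.neighborSet v).ncard) (x : V) :
    ∃ v ∉ closedNbhd G {x}, ∀ u ∉ closedNbhd G {x}, ¬ G.Adj v u := by
  by_contra! hno
  have hG : NoIsolated G := fun v =>
    Set.nonempty_of_ncard_ne_zero (by have := hdeg v; omega : (G.neighborSet v).ncard ≠ 0)
  obtain ⟨Y, hx, hY, hYc⟩ := exists_isIndep_isIndep_compl_of_colorable_two hbip x
  have hNY : G.neighborSet x ⊆ Y := fun w hxw => by_contra fun hw => hYc hx hw hxw
  have hcard := hwc _ _ (isMaxIndep_of_isIndep_compl hG hY hYc)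
    (isMaxIndep_insert_diff_neighborSet hY hYc hx hno)
  have hNle := Set.ncard_le_ncard hNY
  have hlt : (insert x (Y \ G.neighborSet x)).ncard < Y.ncard :=
    calc (insert x (Y \ G.neighborSet x)).ncard
        ≤ (Y \ G.neighborSet x).ncard + 1 := Set.ncard_insert_le _ _
      _ = Y.ncard - (G.neighborSet x).ncard + 1 := by rw [Set.ncard_sdiff hNY]
      _ < Y.ncard := by have := hdeg x; omega
  exact hlt.ne' hcard

theorem isolatable_of_isolated_compl_closedNbhd_singleton {x v : V} (hv : v ∉ closedNbhd G {x})
    (hiso : ∀ u ∉ closedNbhd G {x}, ¬ G.Adj v u) : Isolatable G v :=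
  ⟨{x}, isIndep_singleton x, hv, hiso⟩

end

theorem stmt12 {V : Type*} [Fintype V] [Nonempty V] (B : SimpleGraph V)
    (hbip : B.Colorable 2) (hwc : WellCovered B)
    (hdeg : ∀ v, 2 ≤ (B.neighborSet v).ncard) :
    (∀ x : V, ∃ v ∉ closedNbhd B {x}, ∀ u ∉ closedNbhd B {x}, ¬ B.Adj v u) ∧
      ∃ v, Isolatable B v := by
  have hiso := exists_isolated_compl_closedNbhd_singleton hbip hwc hdeg
  obtain ⟨v, hv, hvu⟩ := hiso (Classical.arbitrary V)
  exact ⟨hiso, v, isolatable_of_isolated_compl_closedNbhd_singleton hv hvu⟩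
end

section
/- For all positive integers r and m, the direct product G × G, where G is the complete m-partite graph K_{r,...,r} (each of the m parts has size r), is well-covered with independence number m·r². -/
/-- The complete `m`-partite graph with each part of size `r`. -/
def completeMultipartite (m r : ℕ) : SimpleGraph (Fin m × Fin r) where
  Adj u v := u.1 ≠ v.1
  symm := ⟨fun u v h => Ne.symm h⟩
  loopless := ⟨fun u h => h rfl⟩

/-!
Two vertices of `K × K`, `K` complete multipartite, are non-adjacent exactly when their first
coordinates or their second coordinates lie in a common part. If an independent set contains two
vertices sharing the first part but not the second, any third vertex must share the first part
with both; so every independent set lies inside a "row" (first coordinate in a fixed part) or a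
"column" (second coordinate in a fixed part). Rows and columns are themselves independent, hence
they are exactly the maximal independent sets, and each has `r · (m r) = m r²` vertices.
-/

open Set

section General

variable {V W : Type*} {G : SimpleGraph V}

lemma IsIndep.preimage_fst {s : Set V} (hs : IsIndep G s) (H : SimpleGraph W) :
    IsIndep (directProd G H) (Prod.fst ⁻¹' s) :=
  fun _ hu _ hv huv => hs hu hv huv.1

lemma IsIndep.preimage_snd {s : Set W} {H : SimpleGraph W} (hs : IsIndep H s) (G : SimpleGraph V) :
    IsIndep (directProd G H) (Prod.snd ⁻¹' s) :=
  fun _ hu _ hv huv => hs hu hv huv.2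

lemma IsIndep.exists_isMaxIndep_superset {s : Set V} (hs : IsIndep G s) :
    ∃ t, s ⊆ t ∧ IsMaxIndep G t := by
  obtain ⟨t, hst, ht⟩ := zorn_subset_nonempty {t | IsIndep G t}
    (fun c hc hchain _ => ⟨⋃₀ c, fun u ⟨t₁, ht₁, hu⟩ v ⟨t₂, ht₂, hv⟩ => by
      rcases hchain.total ht₁ ht₂ with h | h
      · exact hc ht₂ (h hu) hv
      · exact hc ht₁ hu (h hv),
      fun _ => subset_sUnion_of_mem⟩) s hs
  exact ⟨t, hst, ht.1, fun t' ht' htt' => htt'.antisymm (ht.2 ht' htt')⟩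

lemma indepNum_eq_of_forall_isMaxIndep_ncard_eq [Finite V] {k : ℕ}
    (h : ∀ s, IsMaxIndep G s → s.ncard = k) : indepNum G = k := by
  refine IsGreatest.csSup_eq ⟨?_, ?_⟩
  · obtain ⟨t, -, ht⟩ := (show IsIndep G ∅ from fun _ hu => hu.elim).exists_isMaxIndep_superset
    exact ⟨t, ht.1, h t ht⟩
  · rintro _ ⟨s, hs, rfl⟩
    obtain ⟨t, hst, ht⟩ := hs.exists_isMaxIndep_superset
    exact h t ht ▸ ncard_le_ncard hst (toFinite t)

end General

lemma subset_fiber_or_subset_fiber {γ α β : Type*} {f : γ → α} {g : γ → β} {s : Set γ}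
    (hs : ∀ p ∈ s, ∀ q ∈ s, f p = f q ∨ g p = g q) {x : γ} (hx : x ∈ s) :
    s ⊆ {p | f p = f x} ∨ s ⊆ {p | g p = g x} := by
  by_contra h
  obtain ⟨y, hy, hfy⟩ := not_subset.1 (not_or.1 h).1
  obtain ⟨z, hz, hgz⟩ := not_subset.1 (not_or.1 h).2
  have hgy : g y = g x := (hs y hy x hx).resolve_left hfy
  have hfz : f z = f x := (hs z hz x hx).resolve_right hgz
  rcases hs y hy z hz with h | h
  · exact hfy (h.trans hfz)
  · exact hgz (h.symm.trans hgy)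

section CompleteMultipartite

variable {m r n k : ℕ}

lemma completeMultipartite_isIndep_part (a : Fin m) :
    IsIndep (completeMultipartite m r) {u | u.1 = a} :=
  fun _ hu _ hv huv => huv (hu.trans hv.symm)

lemma directProd_completeMultipartite_not_adj_iff {x y : (Fin m × Fin r) × (Fin n × Fin k)} :
    ¬ (directProd (completeMultipartite m r) (completeMultipartite n k)).Adj x y ↔
      x.1.1 = y.1.1 ∨ x.2.1 = y.2.1 := by
  simp only [directProd, completeMultipartite, not_and_or, not_not]

lemma isMaxIndep_directProd_completeMultipartite (hm : 0 < m)
    {s : Set ((Fin m × Fin r) × (Fin n × Fin k))}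
    (hs : IsMaxIndep (directProd (completeMultipartite m r) (completeMultipartite n k)) s) :
    (∃ a, s = {x | x.1.1 = a}) ∨ ∃ c, s = {x | x.2.1 = c} := by
  have hrow (a : Fin m) := (completeMultipartite_isIndep_part (r := r) a).preimage_fst
    (completeMultipartite n k)
  have hcol (c : Fin n) := (completeMultipartite_isIndep_part (r := k) c).preimage_snd
    (completeMultipartite m r)
  rcases s.eq_empty_or_nonempty with rfl | ⟨x, hx⟩
  · exact .inl ⟨⟨0, hm⟩, hs.2 _ (hrow _) (empty_subset _)⟩
  have hagree : ∀ p ∈ s, ∀ q ∈ s, p.1.1 = q.1.1 ∨ p.2.1 = q.2.1 :=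
    fun p hp q hq => directProd_completeMultipartite_not_adj_iff.1 (hs.1 hp hq)
  rcases subset_fiber_or_subset_fiber hagree hx with h | h
  · exact .inl ⟨x.1.1, hs.2 _ (hrow _) h⟩
  · exact .inr ⟨x.2.1, hs.2 _ (hcol _) h⟩

lemma ncard_row (a : Fin m) :
    {x : (Fin m × Fin r) × (Fin n × Fin k) | x.1.1 = a}.ncard = r * (n * k) := by
  have : {x : (Fin m × Fin r) × (Fin n × Fin k) | x.1.1 = a} = ({a} ×ˢ univ) ×ˢ univ := by
    ext; simp
  simp [this, ncard_prod]

lemma ncard_col (c : Fin n) :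
    {x : (Fin m × Fin r) × (Fin n × Fin k) | x.2.1 = c}.ncard = m * r * k := by
  have : {x : (Fin m × Fin r) × (Fin n × Fin k) | x.2.1 = c} = univ ×ˢ ({c} ×ˢ univ) := by
    ext; simp
  simp [this, ncard_prod]

lemma ncard_of_isMaxIndep_directProd_completeMultipartite (hm : 0 < m)
    {s : Set ((Fin m × Fin r) × (Fin m × Fin r))}
    (hs : IsMaxIndep (directProd (completeMultipartite m r) (completeMultipartite m r)) s) :
    s.ncard = m * r ^ 2 := by
  rcases isMaxIndep_directProd_completeMultipartite hm hs with ⟨a, rfl⟩ | ⟨c, rfl⟩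
  · rw [ncard_row]; ring
  · rw [ncard_col]; ring

end CompleteMultipartite

theorem stmt19_general (r m : ℕ) (hm : 0 < m) :
    WellCovered (directProd (completeMultipartite m r) (completeMultipartite m r)) ∧
      indepNum (directProd (completeMultipartite m r) (completeMultipartite m r)) = m * r ^ 2 := by
  have hcard (s) := ncard_of_isMaxIndep_directProd_completeMultipartite (r := r) (s := s) hm
  exact ⟨fun s t hs ht ↦ (hcard s hs).trans (hcard t ht).symm,
    indepNum_eq_of_forall_isMaxIndep_ncard_eq hcard⟩

theorem stmt19 (r m : ℕ) (hr : 0 < r) (hm : 0 < m) :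
    WellCovered (directProd (completeMultipartite m r) (completeMultipartite m r)) ∧
      indepNum (directProd (completeMultipartite m r) (completeMultipartite m r)) = m * r ^ 2 :=
  stmt19_general r m hm
end
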